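/- arXiv:2006.05463 — 6 statements merged into one kernel-verified Lean document; each statement's English description precedes it below -/
import Mathlib

section
/- If the action set Act is finite and nonempty, then the inclusion of verdict equivalence in ω-verdict equivalence is strict: the monitors yes and Σ_{a ∈ Act} a.yes are ω-verdict equivalent but not verdict equivalent. -/
/-- Recursion-free regular monitors (with variables). -/
inductive Mon (Act : Type) : Type
  | end_ : Mon Act
  | yes : Mon Act
  | no : Mon Act
  | act : Act → Mon Act → Mon Act
  | plus : Mon Act → Mon Act → Mon Act
  | var : ℕ → Mon Act

variable {Act : Type}

/-- Verdicts: `end`, `yes`, `no`. -/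
inductive IsVerdict : Mon Act → Prop
  | end_ : IsVerdict Mon.end_
  | yes : IsVerdict Mon.yes
  | no : IsVerdict Mon.no

/-- Labelled transition relation; `none` is the silent action τ. -/
inductive Step : Mon Act → Option Act → Mon Act → Prop
  | act (a : Act) (m : Mon Act) : Step (Mon.act a m) (some a) m
  | plusL {m n m' : Mon Act} {α : Option Act} : Step m α m' → Step (Mon.plus m n) α m'
  | plusR {m n n' : Mon Act} {α : Option Act} : Step n α n' → Step (Mon.plus m n) α n'
  | verdict {v : Mon Act} {α : Option Act} : IsVerdict v → Step v α v

/-- Reflexive-transitive closure of τ-steps. -/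
def TauStar (m n : Mon Act) : Prop :=
  Relation.ReflTransGen (fun p q => Step p none q) m n

/-- Strong transition along a finite trace. -/
inductive Trace : Mon Act → List Act → Mon Act → Prop
  | refl (m : Mon Act) : Trace m [] m
  | cons {m m' m'' : Mon Act} {a : Act} {s : List Act} :
      Step m (some a) m' → Trace m' s m'' → Trace m (a :: s) m''

/-- Weak transition along a finite trace (τ-steps allowed throughout). -/
inductive WTrace : Mon Act → List Act → Mon Act → Prop
  | nil {m m' : Mon Act} : TauStar m m' → WTrace m [] m'
  | cons {m m₁ m₂ m' : Mon Act} {a : Act} {s : List Act} :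
      TauStar m m₁ → Step m₁ (some a) m₂ → WTrace m₂ s m' → WTrace m (a :: s) m'

/-- Acceptance language. -/
def La (m : Mon Act) : Set (List Act) := {s | WTrace m s Mon.yes}

/-- Rejection language. -/
def Lr (m : Mon Act) : Set (List Act) := {s | WTrace m s Mon.no}

/-- Verdict equivalence. -/
def VerdEq (m n : Mon Act) : Prop := La m = La n ∧ Lr m = Lr n

/-- `A · Act^ω`: infinite words having a finite prefix in `A`. -/
def omegaCl (A : Set (List Act)) : Set (ℕ → Act) :=
  {w | ∃ n : ℕ, (List.range n).map w ∈ A}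

/-- ω-verdict equivalence. -/
def OmegaEq (m n : Mon Act) : Prop :=
  omegaCl (La m) = omegaCl (La n) ∧ omegaCl (Lr m) = omegaCl (Lr n)

/-- Closed monitors: no variables. -/
def Closed : Mon Act → Prop
  | Mon.act _ m => Closed m
  | Mon.plus m n => Closed m ∧ Closed n
  | Mon.var _ => False
  | _ => True

/-- `yes` occurs as a subterm. -/
def HasYes : Mon Act → Prop
  | Mon.yes => True
  | Mon.act _ m => HasYes m
  | Mon.plus m n => HasYes m ∨ HasYes n
  | _ => False

/-- `no` occurs as a subterm. -/
def HasNo : Mon Act → Prop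
  | Mon.no => True
  | Mon.act _ m => HasNo m
  | Mon.plus m n => HasNo m ∨ HasNo n
  | _ => False

/-- Syntactic depth. -/
def depth : Mon Act → ℕ
  | Mon.act _ m => depth m + 1
  | Mon.plus m n => max (depth m) (depth n)
  | _ => 0

/-- Applying a substitution. -/
def msubst (σ : ℕ → Mon Act) : Mon Act → Mon Act
  | Mon.var x => σ x
  | Mon.act a m => Mon.act a (msubst σ m)
  | Mon.plus m n => Mon.plus (msubst σ m) (msubst σ n)
  | m => m

/-- Equational derivability from an axiom set `E`. -/
inductive Deriv (E : Mon Act → Mon Act → Prop) : Mon Act → Mon Act → Prop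
  | ax {m n} : E m n → Deriv E m n
  | refl (m) : Deriv E m m
  | symm {m n} : Deriv E m n → Deriv E n m
  | trans {m n p} : Deriv E m n → Deriv E n p → Deriv E m p
  | act (a : Act) {m n} : Deriv E m n → Deriv E (Mon.act a m) (Mon.act a n)
  | plus {m m' n n'} : Deriv E m m' → Deriv E n n' → Deriv E (Mon.plus m n) (Mon.plus m' n')
  | subst (σ : ℕ → Mon Act) {m n} : Deriv E m n → Deriv E (msubst σ m) (msubst σ n)

def vx : Mon Act := Mon.var 0
def vy : Mon Act := Mon.var 1
def vz : Mon Act := Mon.var 2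

/-- The axiom system `E_v`. -/
inductive EvAx : Mon Act → Mon Act → Prop
  | A1 : EvAx (Mon.plus vx vy) (Mon.plus vy vx)
  | A2 : EvAx (Mon.plus vx (Mon.plus vy vz)) (Mon.plus (Mon.plus vx vy) vz)
  | A3 : EvAx (Mon.plus vx vx) vx
  | A4 : EvAx (Mon.plus vx Mon.end_) vx
  | Ea (a : Act) : EvAx (Mon.act a Mon.end_) Mon.end_
  | Ya (a : Act) : EvAx Mon.yes (Mon.plus Mon.yes (Mon.act a Mon.yes))
  | Na (a : Act) : EvAx Mon.no (Mon.plus Mon.no (Mon.act a Mon.no))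
  | Da (a : Act) : EvAx (Mon.act a (Mon.plus vx vy)) (Mon.plus (Mon.act a vx) (Mon.act a vy))

/-- Sum of a list of monitors (`end` for the empty sum). -/
def sumList : List (Mon Act) → Mon Act
  | [] => Mon.end_
  | [m] => m
  | m :: ms => Mon.plus m (sumList ms)

/-- `s.m`: the monitor performing exactly the actions of `s` and then behaving as `m`. -/
def prefixMon (s : List Act) (m : Mon Act) : Mon Act :=
  List.foldr Mon.act m s

/-- Build `Σ_{(a,m)∈l} a.m [+ yes] [+ no]`. -/
def buildNF (l : List (Act × Mon Act)) (hy hn : Bool) : Mon Act :=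
  sumList (l.map (fun p => Mon.act p.1 p.2) ++
    (if hy then [Mon.yes] else []) ++ (if hn then [Mon.no] else []))

/-- Normal forms for closed monitors. -/
inductive NF : Mon Act → Prop
  | mk (l : List (Act × Mon Act)) (hy hn : Bool) :
      (l.map Prod.fst).Nodup →
      (∀ p ∈ l, p.2 ≠ Mon.end_) →
      (∀ p ∈ l, NF p.2) →
      NF (buildNF l hy hn)

/-- Build `Σ_{(a,m)∈l} a.m + Σ_{x∈vs} x [+ yes] [+ no]`. -/
def buildONF (l : List (Act × Mon Act)) (vs : List ℕ) (hy hn : Bool) : Mon Act :=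
  sumList (l.map (fun p => Mon.act p.1 p.2) ++ vs.map Mon.var ++
    (if hy then [Mon.yes] else []) ++ (if hn then [Mon.no] else []))

/-- Open normal forms. -/
inductive ONF : Mon Act → Prop
  | mk (l : List (Act × Mon Act)) (vs : List ℕ) (hy hn : Bool) :
      (l.map Prod.fst).Nodup → vs.Nodup →
      (∀ p ∈ l, p.2 ≠ Mon.end_) →
      (∀ p ∈ l, ONF p.2) →
      ONF (buildONF l vs hy hn)

/-- `s^i`: the `i`-fold concatenation of `s`. -/
def spow (s : List Act) (i : ℕ) : List Act := (List.replicate i s).flatten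

/-- All traces of length exactly `n` over the alphabet listed by `L`. -/
def tuples (L : List Act) : ℕ → List (List Act)
  | 0 => [[]]
  | n + 1 => (tuples L n).flatMap (fun t => L.map (fun a => a :: t))

/-- All traces of length at most `n`. -/
def allUpTo (L : List Act) (n : ℕ) : List (List Act) :=
  (List.range (n + 1)).flatMap (tuples L)

/-- `s̄^≤(m)`: sum of `s'.m` over traces `s'` with `|s'| ≤ |s|` that are not prefixes of `s`. -/
def sbarLe [DecidableEq Act] (L : List Act) (s : List Act) (m : Mon Act) : Mon Act :=
  sumList (((allUpTo L s.length).filter (fun t => !(t.isPrefixOf s))).map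
    (fun t => prefixMon t m))

/-- `s̄(m) = s̄^≤(m) + s.Σ_{a∈Act} a.m`. -/
def sbar [DecidableEq Act] (L : List Act) (s : List Act) (m : Mon Act) : Mon Act :=
  Mon.plus (sbarLe L s m) (prefixMon s (sumList (L.map fun a => Mon.act a m)))

/-- `s̄^(k)(m)`. -/
def sbarK [DecidableEq Act] (L : List Act) (s : List Act) (m : Mon Act) : ℕ → Mon Act
  | 0 => sbar L s m
  | 1 => sbar L s m
  | k + 2 =>
      Mon.plus
        (sumList ((List.range k).map (fun i => prefixMon (spow s (i + 1)) (sbarLe L s m))))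
        (prefixMon (spow s (k + 1)) (sbar L s m))

/-! A silent step out of a monitor can only pick a verdict summand of it, so the empty trace
is accepted only by monitors with a summand `yes`, which `Σ a.yes` lacks. Every infinite word
has the one-letter prefix `w 0`, accepted by both monitors, and neither monitor contains `no`,
so neither rejects anything. -/

def HasYesSummand : Mon Act → Prop
  | Mon.yes => True
  | Mon.plus m n => HasYesSummand m ∨ HasYesSummand n
  | _ => False

section Monitors

variable {m m' v : Mon Act} {a : Act} {α : Option Act} {s : List Act}

theorem exists_mem_of_sumList {P : Mon Act → Prop} (hend : ¬P Mon.end_)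
    (hplus : ∀ m n, P (Mon.plus m n) → P m ∨ P n) :
    ∀ {ms : List (Mon Act)}, P (sumList ms) → ∃ m ∈ ms, P m
  | [], h => absurd h hend
  | [m], h => ⟨m, List.mem_singleton_self m, h⟩
  | m :: n :: ms, h => by
    rcases hplus _ _ h with h | h
    · exact ⟨m, List.mem_cons_self, h⟩
    · obtain ⟨k, hk, hPk⟩ := exists_mem_of_sumList hend hplus h
      exact ⟨k, List.mem_cons_of_mem m hk, hPk⟩

theorem step_sumList_of_mem :
    ∀ {ms : List (Mon Act)}, m ∈ ms → Step m α m' → Step (sumList ms) α m'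
  | [], hm, _ => absurd hm List.not_mem_nil
  | [_], hm, h => List.mem_singleton.mp hm ▸ h
  | k :: n :: ms, hm, h => by
    rcases List.mem_cons.mp hm with rfl | hm
    · exact Step.plusL h
    · exact Step.plusR (step_sumList_of_mem hm h)

theorem Step.hasNo_of_hasNo (h : Step m α m') (hm' : HasNo m') : HasNo m := by
  induction h with
  | act => exact hm'
  | plusL _ ih => exact Or.inl (ih hm')
  | plusR _ ih => exact Or.inr (ih hm')
  | verdict => exact hm'

theorem TauStar.hasNo_of_hasNo (h : TauStar m m') (hm' : HasNo m') : HasNo m :=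
  Relation.ReflTransGen.head_induction_on h hm' fun hstep _ ih => hstep.hasNo_of_hasNo ih

theorem WTrace.hasNo_of_hasNo (h : WTrace m s m') (hm' : HasNo m') : HasNo m := by
  induction h with
  | nil htau => exact htau.hasNo_of_hasNo hm'
  | cons htau hstep _ ih => exact htau.hasNo_of_hasNo (hstep.hasNo_of_hasNo (ih hm'))

theorem Lr_eq_empty_of_not_hasNo (hm : ¬HasNo m) : Lr m = ∅ :=
  Set.eq_empty_of_forall_notMem fun _ h => hm (WTrace.hasNo_of_hasNo h trivial)

theorem Step.hasYesSummand_of_hasYesSummand (h : Step m none m') (hm' : HasYesSummand m') :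
    HasYesSummand m := by
  generalize hα : (none : Option Act) = α at h
  induction h with
  | act => cases hα
  | plusL _ ih => exact Or.inl (ih hm' hα)
  | plusR _ ih => exact Or.inr (ih hm' hα)
  | verdict => exact hm'

theorem hasYesSummand_of_nil_mem_La (h : [] ∈ La m) : HasYesSummand m := by
  obtain ⟨htau⟩ := h
  exact Relation.ReflTransGen.head_induction_on htau trivial
    fun hstep _ ih => hstep.hasYesSummand_of_hasYesSummand ih

theorem IsVerdict.wTrace_self (hv : IsVerdict v) : ∀ s : List Act, WTrace v s v
  | [] => WTrace.nil Relation.ReflTransGen.refl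
  | _ :: s => WTrace.cons Relation.ReflTransGen.refl (Step.verdict hv) (hv.wTrace_self s)

theorem singleton_mem_La (h : Step m (some a) Mon.yes) : [a] ∈ La m :=
  WTrace.cons Relation.ReflTransGen.refl h (WTrace.nil Relation.ReflTransGen.refl)

end Monitors

theorem omegaCl_eq_univ_of_forall_singleton_mem {A : Set (List Act)} (h : ∀ a, [a] ∈ A) :
    omegaCl A = Set.univ :=
  Set.eq_univ_of_forall fun w => ⟨1, by simpa using h (w 0)⟩

theorem stmt4_general [Fintype Act] :
    OmegaEq (Mon.yes : Mon Act)
        (sumList ((Finset.univ : Finset Act).toList.map (fun a => Mon.act a Mon.yes))) ∧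
    ¬ VerdEq (Mon.yes : Mon Act)
        (sumList ((Finset.univ : Finset Act).toList.map (fun a => Mon.act a Mon.yes))) := by
  set acts := (Finset.univ : Finset Act).toList.map (fun a => Mon.act a Mon.yes)
  have mem_acts (a : Act) : Mon.act a Mon.yes ∈ acts := by simp [acts]
  have La_yes : La (Mon.yes : Mon Act) = Set.univ :=
    Set.eq_univ_of_forall IsVerdict.yes.wTrace_self
  refine ⟨⟨?_, ?_⟩, fun ⟨hLa, _⟩ => ?_⟩
  · rw [omegaCl_eq_univ_of_forall_singleton_mem fun a => La_yes ▸ Set.mem_univ _,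
      omegaCl_eq_univ_of_forall_singleton_mem fun a =>
        singleton_mem_La (step_sumList_of_mem (mem_acts a) (Step.act a _))]
  · have no_free : ¬HasNo (sumList acts) := fun h => by
      obtain ⟨_, hm, hno⟩ := exists_mem_of_sumList id (fun _ _ => id) h
      obtain ⟨a, -, rfl⟩ := List.mem_map.mp hm
      exact hno
    rw [Lr_eq_empty_of_not_hasNo id, Lr_eq_empty_of_not_hasNo no_free]
  · have hnil : [] ∈ La (sumList acts) := hLa ▸ La_yes ▸ Set.mem_univ _
    obtain ⟨_, hm, hyes⟩ := exists_mem_of_sumList id (fun _ _ => id)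
      (hasYesSummand_of_nil_mem_La hnil)
    obtain ⟨a, -, rfl⟩ := List.mem_map.mp hm
    exact hyes

/-- over a finite nonempty alphabet, `yes` and `Σ_{a∈Act} a.yes` are
ω-verdict equivalent but not verdict equivalent. -/
theorem stmt4 [Fintype Act] [Nonempty Act] :
    OmegaEq (Mon.yes : Mon Act)
        (sumList ((Finset.univ : Finset Act).toList.map (fun a => Mon.act a Mon.yes))) ∧
    ¬ VerdEq (Mon.yes : Mon Act)
        (sumList ((Finset.univ : Finset Act).toList.map (fun a => Mon.act a Mon.yes))) :=
  stmt4_general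
end

section
/- If the action set Act is infinite, then verdict equivalence and ω-verdict equivalence coincide on closed monitors: m ≃_ω n implies m ≃ n. -/
variable {Act : Type}

/-!
Since `Act` is infinite, some action `b` occurs in neither `m` nor `n`. A monitor can perform an
action it does not mention only from a verdict, and verdicts are absorbing. So for `s ∈ L(m)` the
word `s b^ω` lies in `L(m)·Act^ω`, hence has a prefix in `L(n)`; since verdicts persist, `s b^k` is
in `L(n)` for some `k ≥ 1`, and when `n` reads the first `b` after `s` it must already be at the
verdict.
-/

def acts : Mon Act → List Act
  | Mon.act a m => a :: acts m
  | Mon.plus m n => acts m ++ acts n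
  | _ => []

section Transitions

variable {p q r v : Mon Act}

theorem Step.acts_subset {α : Option Act} (h : Step p α q) : acts q ⊆ acts p := by
  induction h with
  | act a m => exact List.subset_cons_self a _
  | plusL _ ih => exact List.Subset.trans ih (List.subset_append_left _ _)
  | plusR _ ih => exact List.Subset.trans ih (List.subset_append_right _ _)
  | verdict _ => exact List.Subset.refl _

theorem TauStar.acts_subset (h : TauStar p q) : acts q ⊆ acts p := by
  induction h with
  | refl => exact List.Subset.refl _
  | tail _ hstep ih => exact List.Subset.trans hstep.acts_subset ih

theorem WTrace.acts_subset {s : List Act} (h : WTrace p s q) : acts q ⊆ acts p := by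
  induction h with
  | nil hτ => exact hτ.acts_subset
  | cons hτ hstep _ ih =>
    exact List.Subset.trans ih (List.Subset.trans hstep.acts_subset hτ.acts_subset)

theorem Step.eq_of_isVerdict {α : Option Act} (hv : IsVerdict v) (h : Step v α q) : q = v := by
  cases hv <;> cases h <;> rfl

theorem TauStar.eq_of_isVerdict (hv : IsVerdict v) (h : TauStar v q) : q = v := by
  induction h with
  | refl => rfl
  | tail _ hstep ih => subst ih; exact hstep.eq_of_isVerdict hv

theorem WTrace.eq_of_isVerdict {s : List Act} (hv : IsVerdict v) (h : WTrace v s q) : q = v := by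
  induction h with
  | nil hτ => exact hτ.eq_of_isVerdict hv
  | cons hτ hstep _ ih =>
    obtain rfl := hτ.eq_of_isVerdict hv
    obtain rfl := hstep.eq_of_isVerdict hv
    exact ih hv

theorem WTrace.of_isVerdict (hv : IsVerdict v) (s : List Act) : WTrace v s v := by
  induction s with
  | nil => exact WTrace.nil Relation.ReflTransGen.refl
  | cons a s ih => exact WTrace.cons Relation.ReflTransGen.refl (Step.verdict hv) ih

theorem Step.tau_and_isVerdict_of_notMem {b : Act} (h : Step p (some b) q) (hb : b ∉ acts p) :
    Step p none q ∧ IsVerdict q := by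
  generalize hα : (some b : Option Act) = α at h
  induction h with
  | act a m => cases hα; exact absurd List.mem_cons_self hb
  | plusL _ ih =>
    obtain ⟨hτ, hq⟩ := ih (fun hx => hb (List.mem_append_left _ hx)) hα
    exact ⟨Step.plusL hτ, hq⟩
  | plusR _ ih =>
    obtain ⟨hτ, hq⟩ := ih (fun hx => hb (List.mem_append_right _ hx)) hα
    exact ⟨Step.plusR hτ, hq⟩
  | verdict hv => exact ⟨Step.verdict hv, hv⟩

theorem WTrace.tauStar_trans {s : List Act} (hτ : TauStar p q) (h : WTrace q s r) :
    WTrace p s r := by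
  cases h with
  | nil hτ' => exact WTrace.nil (hτ.trans hτ')
  | cons hτ' hstep hrest => exact WTrace.cons (hτ.trans hτ') hstep hrest

theorem WTrace.append {s t : List Act} (h₁ : WTrace p s q) (h₂ : WTrace q t r) :
    WTrace p (s ++ t) r := by
  induction h₁ with
  | nil hτ => exact h₂.tauStar_trans hτ
  | cons hτ hstep _ ih => exact WTrace.cons hτ hstep (ih h₂)

theorem WTrace.exists_of_append {t : List Act} :
    ∀ {s : List Act} {p : Mon Act}, WTrace p (s ++ t) r → ∃ q, WTrace p s q ∧ WTrace q t r
  | [], p, h => ⟨p, WTrace.nil Relation.ReflTransGen.refl, h⟩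
  | _ :: _, _, WTrace.cons hτ hstep hrest =>
    let ⟨q, hq₁, hq₂⟩ := WTrace.exists_of_append hrest
    ⟨q, WTrace.cons hτ hstep hq₁, hq₂⟩

theorem TauStar.of_wTrace_cons_notMem {b : Act} {t : List Act} (hb : b ∉ acts p)
    (h : WTrace p (b :: t) v) : TauStar p v := by
  cases h with
  | cons hτ hstep hrest =>
    obtain ⟨hstepτ, hq⟩ := hstep.tau_and_isVerdict_of_notMem fun hx => hb (hτ.acts_subset hx)
    obtain rfl := hrest.eq_of_isVerdict hq
    exact hτ.tail hstepτ

theorem WTrace.of_append_cons_notMem {b : Act} {s t : List Act} (hb : b ∉ acts p)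
    (h : WTrace p (s ++ b :: t) v) : WTrace p s v := by
  obtain ⟨q, hpq, hqv⟩ := WTrace.exists_of_append h
  have hτ := TauStar.of_wTrace_cons_notMem (fun hx => hb (hpq.acts_subset hx)) hqv
  simpa using hpq.append (WTrace.nil hτ)

end Transitions

theorem List.map_range_getD {α : Type*} (s : List α) (b : α) (k : ℕ) :
    (List.range (s.length + k)).map (fun i => s.getD i b) = s ++ List.replicate k b := by
  rw [List.range_add, List.map_append, List.map_map]
  congr 1
  · exact List.ext_getElem (by simp) fun i _ h => by simp [List.getElem?_eq_getElem h]
  · simp [Function.comp_def]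

theorem verdictLang_subset_of_omegaCl_subset {v m n : Mon Act} {b : Act} (hv : IsVerdict v)
    (hb : b ∉ acts n)
    (hsub : omegaCl {s | WTrace m s v} ⊆ omegaCl {s | WTrace n s v}) :
    {s | WTrace m s v} ⊆ {s | WTrace n s v} := by
  intro s hs
  -- the infinite word `s b^ω`
  have hw : (fun i => s.getD i b) ∈ omegaCl {s | WTrace m s v} :=
    ⟨s.length, by rw [← Nat.add_zero s.length, List.map_range_getD]; simpa using hs⟩
  obtain ⟨ℓ, hℓ⟩ := hsub hw
  have hlong : WTrace n ((List.range (ℓ + (s.length + 1))).map fun i => s.getD i b) v := by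
    rw [List.range_add, List.map_append]
    exact hℓ.append (WTrace.of_isVerdict hv _)
  rw [show ℓ + (s.length + 1) = s.length + (ℓ + 1) by omega, List.map_range_getD,
    List.replicate_succ] at hlong
  exact WTrace.of_append_cons_notMem hb hlong

theorem exists_notMem_acts [Infinite Act] (m n : Mon Act) : ∃ b, b ∉ acts m ∧ b ∉ acts n := by
  classical
  obtain ⟨b, hb⟩ := Infinite.exists_notMem_finset (acts m ++ acts n).toFinset
  exact ⟨b, by simpa [not_or] using hb⟩

theorem stmt5_general [Infinite Act] (m n : Mon Act)
    (h : OmegaEq m n) : VerdEq m n := by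
  obtain ⟨b, hbm, hbn⟩ := exists_notMem_acts m n
  obtain ⟨ha, hr⟩ := h
  exact ⟨(verdictLang_subset_of_omegaCl_subset IsVerdict.yes hbn ha.le).antisymm
      (verdictLang_subset_of_omegaCl_subset IsVerdict.yes hbm ha.ge),
    (verdictLang_subset_of_omegaCl_subset IsVerdict.no hbn hr.le).antisymm
      (verdictLang_subset_of_omegaCl_subset IsVerdict.no hbm hr.ge)⟩

/-- over an infinite alphabet, ω-verdict equivalence implies verdict
equivalence on closed monitors. -/
theorem stmt5 [Infinite Act] (m n : Mon Act) (hm : Closed m) (hn : Closed n)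
    (h : OmegaEq m n) : VerdEq m n :=
  stmt5_general m n h
end

section
/- For every a ∈ Act and all closed monitors m, n, the distributivity axiom is sound with respect to verdict equivalence: a.(m + n) ≃ a.m + a.n. -/
variable {Act : Type}

/-! Weak traces into a verdict `v` are determined by first steps: a sum moves exactly as one of
its summands and `a.m`, not being a verdict, moves only by `a` to `m`. Hence both sides
reach `v` along exactly the traces `a :: s` with `s` leading `m` or `n` to `v`. -/

namespace WTrace

variable {m m' p v : Mon Act} {s : List Act}

theorem head {α : Option Act} (hstep : Step m α p) (h : WTrace p s v) :
    WTrace m (α.toList ++ s) v := by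
  cases α with
  | none =>
    cases h with
    | nil h => exact .nil (Relation.ReflTransGen.head hstep h)
    | cons h₁ h₂ h₃ => exact .cons (Relation.ReflTransGen.head hstep h₁) h₂ h₃
  | some a => exact .cons .refl hstep h

theorem cases_head (hmv : m ≠ v) (h : WTrace m s v) :
    ∃ α p s', Step m α p ∧ s = α.toList ++ s' ∧ WTrace p s' v := by
  cases h with
  | nil h =>
    rcases Relation.ReflTransGen.cases_head h with rfl | ⟨p, hstep, hrest⟩
    · exact absurd rfl hmv
    · exact ⟨none, p, [], hstep, rfl, .nil hrest⟩
  | cons h₁ h₂ h₃ =>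
    rcases Relation.ReflTransGen.cases_head h₁ with rfl | ⟨p, hstep, hrest⟩
    · exact ⟨_, _, _, h₂, rfl, h₃⟩
    · exact ⟨none, p, _, hstep, rfl, .cons hrest h₂ h₃⟩

theorem of_step_imp (hv : IsVerdict v) (hsim : ∀ α p, Step m α p → Step m' α p)
    (h : WTrace m s v) : WTrace m' s v := by
  by_cases hmv : m = v
  · -- the τ-loop of the verdict is the first step to mimic
    subst hmv
    exact head (α := none) (hsim _ _ (Step.verdict hv)) h
  · obtain ⟨α, p, s', hstep, rfl, h'⟩ := cases_head hmv h
    exact head (hsim _ _ hstep) h'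

theorem plus_iff {n : Mon Act} (hv : IsVerdict v) :
    WTrace (Mon.plus m n) s v ↔ WTrace m s v ∨ WTrace n s v := by
  refine ⟨fun h => ?_, ?_⟩
  · obtain ⟨α, p, s', hstep, rfl, h'⟩ := cases_head (by rintro rfl; cases hv) h
    cases hstep with
    | plusL hstep => exact .inl (head hstep h')
    | plusR hstep => exact .inr (head hstep h')
    | verdict hv' => cases hv'
  · rintro (h | h)
    · exact of_step_imp hv (fun _ _ => Step.plusL) h
    · exact of_step_imp hv (fun _ _ => Step.plusR) h

theorem act_iff {a : Act} (hv : IsVerdict v) :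
    WTrace (Mon.act a m) s v ↔ ∃ s', s = a :: s' ∧ WTrace m s' v := by
  refine ⟨fun h => ?_, ?_⟩
  · obtain ⟨α, p, s', hstep, rfl, h'⟩ := cases_head (by rintro rfl; cases hv) h
    cases hstep with
    | act => exact ⟨s', rfl, h'⟩
    | verdict hv' => cases hv'
  · rintro ⟨s', rfl, h⟩
    exact head (Step.act a m) h

theorem act_plus_iff {a : Act} {n : Mon Act} (hv : IsVerdict v) :
    WTrace (Mon.act a (Mon.plus m n)) s v ↔
      WTrace (Mon.plus (Mon.act a m) (Mon.act a n)) s v := by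
  simp only [plus_iff hv, act_iff hv, and_or_left, exists_or]

end WTrace

theorem stmt8_general (a : Act) (m n : Mon Act) :
    VerdEq (Mon.act a (Mon.plus m n)) (Mon.plus (Mon.act a m) (Mon.act a n)) :=
  ⟨Set.ext fun _ => WTrace.act_plus_iff .yes, Set.ext fun _ => WTrace.act_plus_iff .no⟩

/-- soundness of the distributivity axiom `D_a`. -/
theorem stmt8 (a : Act) (m n : Mon Act) (hm : Closed m) (hn : Closed n) :
    VerdEq (Mon.act a (Mon.plus m n)) (Mon.plus (Mon.act a m) (Mon.act a n)) :=
  stmt8_general a m n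
end

section
/- Every closed monitor m is provably equal, using the axioms A1–A4 (commutativity, associativity, idempotence of +, and unit end), E_a (a.end = end), Y_a, N_a, and D_a (a.(x+y) = a.x + a.y), to some monitor m' in normal form with depth(m') ≤ depth(m). -/
variable {Act : Type}

/- Flatten `m` into a sum of action prefixes `a.x` and verdicts, group the summands by their
first action using distributivity `D_a`, normalise each group's continuation by induction on
depth, and finally discard the summands whose continuation normalised to `end` (axiom `E_a`).
Idempotence makes a sum depend only on the set of its summands, which is what justifies the
regrouping. -/

local infix:50 " ≋ " => Deriv EvAx

instance {E : Mon Act → Mon Act → Prop} : Trans (Deriv E) (Deriv E) (Deriv E) :=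
  ⟨Deriv.trans⟩

def inst3 (x y z : Mon Act) : ℕ → Mon Act
  | 0 => x
  | 1 => y
  | _ => z

namespace EvAx

theorem plus_comm (m n : Mon Act) : Mon.plus m n ≋ Mon.plus n m :=
  Deriv.subst (inst3 m n m) (Deriv.ax A1)

theorem plus_assoc (m n p : Mon Act) :
    Mon.plus m (Mon.plus n p) ≋ Mon.plus (Mon.plus m n) p :=
  Deriv.subst (inst3 m n p) (Deriv.ax A2)

theorem plus_idem (m : Mon Act) : Mon.plus m m ≋ m :=
  Deriv.subst (inst3 m m m) (Deriv.ax A3)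

theorem plus_end (m : Mon Act) : Mon.plus m Mon.end_ ≋ m :=
  Deriv.subst (inst3 m m m) (Deriv.ax A4)

theorem end_plus (m : Mon Act) : Mon.plus Mon.end_ m ≋ m :=
  (plus_comm _ _).trans (plus_end m)

theorem act_plus (a : Act) (m n : Mon Act) :
    Mon.act a (Mon.plus m n) ≋ Mon.plus (Mon.act a m) (Mon.act a n) :=
  Deriv.subst (inst3 m n m) (Deriv.ax (Da a))

theorem plus_left_comm (m n p : Mon Act) :
    Mon.plus m (Mon.plus n p) ≋ Mon.plus n (Mon.plus m p) :=
  calc Mon.plus m (Mon.plus n p) ≋ Mon.plus (Mon.plus m n) p := plus_assoc _ _ _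
    _ ≋ Mon.plus (Mon.plus n m) p := Deriv.plus (plus_comm _ _) (Deriv.refl _)
    _ ≋ Mon.plus n (Mon.plus m p) := (plus_assoc _ _ _).symm

theorem sumList_cons (m : Mon Act) (l : List (Mon Act)) :
    sumList (m :: l) ≋ Mon.plus m (sumList l) := by
  cases l with
  | nil => exact (plus_end m).symm
  | cons _ _ => exact Deriv.refl _

theorem sumList_append (l₁ l₂ : List (Mon Act)) :
    sumList (l₁ ++ l₂) ≋ Mon.plus (sumList l₁) (sumList l₂) := by
  induction l₁ with
  | nil => exact (end_plus _).symm
  | cons m l ih =>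
    calc sumList (m :: l ++ l₂) ≋ Mon.plus m (sumList (l ++ l₂)) := sumList_cons _ _
      _ ≋ Mon.plus m (Mon.plus (sumList l) (sumList l₂)) := Deriv.plus (Deriv.refl m) ih
      _ ≋ Mon.plus (Mon.plus m (sumList l)) (sumList l₂) := plus_assoc _ _ _
      _ ≋ Mon.plus (sumList (m :: l)) (sumList l₂) :=
        Deriv.plus (sumList_cons m l).symm (Deriv.refl _)

theorem plus_sumList_of_mem {m : Mon Act} {l : List (Mon Act)} (h : m ∈ l) :
    Mon.plus m (sumList l) ≋ sumList l := by
  induction l with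
  | nil => cases h
  | cons n l ih =>
    refine (Deriv.plus (Deriv.refl m) (sumList_cons n l)).trans
      (Deriv.trans ?_ (sumList_cons n l).symm)
    rcases List.mem_cons.mp h with rfl | h
    · exact (plus_assoc _ _ _).trans (Deriv.plus (plus_idem m) (Deriv.refl _))
    · exact (plus_left_comm _ _ _).trans (Deriv.plus (Deriv.refl n) (ih h))

theorem plus_sumList_of_subset {l₁ l₂ : List (Mon Act)} (h : l₁ ⊆ l₂) :
    Mon.plus (sumList l₁) (sumList l₂) ≋ sumList l₂ := by
  induction l₁ with
  | nil => exact end_plus _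
  | cons m l ih =>
    calc Mon.plus (sumList (m :: l)) (sumList l₂)
        ≋ Mon.plus (Mon.plus m (sumList l)) (sumList l₂) :=
          Deriv.plus (sumList_cons m l) (Deriv.refl _)
      _ ≋ Mon.plus m (Mon.plus (sumList l) (sumList l₂)) := (plus_assoc _ _ _).symm
      _ ≋ Mon.plus m (sumList l₂) :=
          Deriv.plus (Deriv.refl m) (ih (List.subset_of_cons_subset h))
      _ ≋ sumList l₂ := plus_sumList_of_mem (h List.mem_cons_self)

theorem sumList_congr_mem {l₁ l₂ : List (Mon Act)} (h : ∀ m, m ∈ l₁ ↔ m ∈ l₂) :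
    sumList l₁ ≋ sumList l₂ :=
  calc sumList l₁ ≋ Mon.plus (sumList l₂) (sumList l₁) :=
        (plus_sumList_of_subset fun m hm => (h m).mpr hm).symm
    _ ≋ Mon.plus (sumList l₁) (sumList l₂) := plus_comm _ _
    _ ≋ sumList l₂ := plus_sumList_of_subset fun m hm => (h m).mp hm

theorem sumList_map_congr {α : Type} {f g : α → Mon Act} {l : List α}
    (h : ∀ x ∈ l, f x ≋ g x) : sumList (l.map f) ≋ sumList (l.map g) := by
  induction l with
  | nil => exact Deriv.refl _
  | cons x l ih =>
    simp only [List.map_cons]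
    refine (sumList_cons _ _).trans (Deriv.trans ?_ (sumList_cons _ _).symm)
    exact Deriv.plus (h x List.mem_cons_self) (ih fun y hy => h y (List.mem_cons_of_mem x hy))

theorem sumList_flatMap {α : Type} (l : List α) (f : α → List (Mon Act)) :
    sumList (l.flatMap f) ≋ sumList (l.map fun x => sumList (f x)) := by
  induction l with
  | nil => exact Deriv.refl _
  | cons x l ih =>
    rw [List.flatMap_cons, List.map_cons]
    exact (sumList_append _ _).trans
      ((Deriv.plus (Deriv.refl _) ih).trans (sumList_cons _ _).symm)

theorem act_sumList (a : Act) (l : List (Mon Act)) :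
    Mon.act a (sumList l) ≋ sumList (l.map (Mon.act a)) := by
  induction l with
  | nil => exact Deriv.ax (Ea a)
  | cons m l ih =>
    calc Mon.act a (sumList (m :: l)) ≋ Mon.act a (Mon.plus m (sumList l)) :=
          Deriv.act a (sumList_cons m l)
      _ ≋ Mon.plus (Mon.act a m) (Mon.act a (sumList l)) := act_plus _ _ _
      _ ≋ Mon.plus (Mon.act a m) (sumList (l.map (Mon.act a))) :=
          Deriv.plus (Deriv.refl _) ih
      _ ≋ sumList ((m :: l).map (Mon.act a)) := (sumList_cons _ _).symm

end EvAx

open EvAx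

theorem depth_sumList_le {l : List (Mon Act)} {k : ℕ} (h : ∀ m ∈ l, depth m ≤ k) :
    depth (sumList l) ≤ k := by
  induction l with
  | nil => exact Nat.zero_le k
  | cons m l ih =>
    cases l with
    | nil => exact h m List.mem_cons_self
    | cons n l =>
      exact max_le (h m List.mem_cons_self) (ih fun x hx => h x (List.mem_cons_of_mem m hx))

theorem closed_sumList {l : List (Mon Act)} (h : ∀ m ∈ l, Closed m) : Closed (sumList l) := by
  induction l with
  | nil => trivial
  | cons m l ih =>
    cases l with
    | nil => exact h m List.mem_cons_self
    | cons n l => exact ⟨h m List.mem_cons_self, ih fun x hx => h x (List.mem_cons_of_mem m hx)⟩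

def actSum (l : List (Act × Mon Act)) : Mon Act :=
  sumList (l.map fun p => Mon.act p.1 p.2)

theorem buildNF_congr {l l' : List (Act × Mon Act)} (h : actSum l ≋ actSum l') (hy hn : Bool) :
    buildNF l hy hn ≋ buildNF l' hy hn := by
  simp only [buildNF, List.append_assoc]
  exact (sumList_append _ _).trans ((Deriv.plus h (Deriv.refl _)).trans (sumList_append _ _).symm)

theorem depth_buildNF_le {l : List (Act × Mon Act)} {d : ℕ} (h : ∀ p ∈ l, depth p.2 < d)
    (hy hn : Bool) : depth (buildNF l hy hn) ≤ d := by
  refine depth_sumList_le fun m hm => ?_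
  simp only [List.mem_append, List.mem_map] at hm
  rcases hm with (⟨p, hp, rfl⟩ | hm) | hm
  · exact h p hp
  · cases hy <;> simp_all [depth]
  · cases hn <;> simp_all [depth]

theorem buildNF_append (l₁ l₂ : List (Act × Mon Act)) (y₁ n₁ y₂ n₂ : Bool) :
    Mon.plus (buildNF l₁ y₁ n₁) (buildNF l₂ y₂ n₂) ≋
      buildNF (l₁ ++ l₂) (y₁ || y₂) (n₁ || n₂) := by
  unfold buildNF
  refine (sumList_append _ _).symm.trans (sumList_congr_mem fun x => ?_)
  simp only [List.map_append, List.mem_append]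
  cases y₁ <;> cases n₁ <;> cases y₂ <;> cases n₂ <;>
    simp [-List.mem_map, or_comm, or_left_comm, or_assoc]

theorem exists_buildNF (m : Mon Act) (hm : Closed m) :
    ∃ l hy hn, m ≋ buildNF l hy hn ∧ ∀ p ∈ l, Closed p.2 ∧ depth p.2 < depth m := by
  induction m with
  | end_ => exact ⟨[], false, false, Deriv.refl _, by simp⟩
  | yes => exact ⟨[], true, false, Deriv.refl _, by simp⟩
  | no => exact ⟨[], false, true, Deriv.refl _, by simp⟩
  | var => exact hm.elim
  | act a x =>
    refine ⟨[(a, x)], false, false, Deriv.refl _, ?_⟩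
    rintro p (_ | ⟨_, ⟨⟩⟩)
    exact ⟨hm, Nat.lt_succ_self _⟩
  | plus m n ihm ihn =>
    obtain ⟨l₁, y₁, n₁, hd₁, hl₁⟩ := ihm hm.1
    obtain ⟨l₂, y₂, n₂, hd₂, hl₂⟩ := ihn hm.2
    refine ⟨l₁ ++ l₂, y₁ || y₂, n₁ || n₂,
      (Deriv.plus hd₁ hd₂).trans (buildNF_append _ _ _ _ _ _), ?_⟩
    intro p hp
    rcases List.mem_append.mp hp with hp | hp
    · exact ⟨(hl₁ p hp).1, lt_max_of_lt_left (hl₁ p hp).2⟩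
    · exact ⟨(hl₂ p hp).1, lt_max_of_lt_right (hl₂ p hp).2⟩

section

open Classical

noncomputable def actResidual (l : List (Act × Mon Act)) (a : Act) : Mon Act :=
  sumList ((l.filter fun p => p.1 = a).map Prod.snd)

theorem sum_act_actResidual (l : List (Act × Mon Act)) :
    sumList ((l.map Prod.fst).dedup.map fun a => Mon.act a (actResidual l a)) ≋ actSum l := by
  calc _ ≋ sumList ((l.map Prod.fst).dedup.map fun a =>
          sumList ((l.filter fun p => p.1 = a).map fun p => Mon.act a p.2)) :=
        sumList_map_congr fun a _ => by
          simpa only [actResidual, List.map_map, Function.comp_def] using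
            act_sumList a ((l.filter fun p => p.1 = a).map Prod.snd)
    _ ≋ sumList ((l.map Prod.fst).dedup.flatMap fun a =>
          (l.filter fun p => p.1 = a).map fun p => Mon.act a p.2) := (sumList_flatMap _ _).symm
    _ ≋ actSum l := sumList_congr_mem fun m => by
        simp only [List.mem_flatMap, List.mem_dedup, List.mem_map, List.mem_filter,
          decide_eq_true_eq]
        constructor
        · rintro ⟨a, -, p, ⟨hp, rfl⟩, rfl⟩
          exact ⟨p, hp, rfl⟩
        · rintro ⟨p, hp, rfl⟩
          exact ⟨p.1, ⟨p, hp, rfl⟩, p, ⟨hp, rfl⟩, rfl⟩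

theorem actSum_filter_ne_end (l : List (Act × Mon Act)) :
    actSum (l.filter fun p => p.2 ≠ Mon.end_) ≋ actSum l := by
  induction l with
  | nil => exact Deriv.refl _
  | cons p l ih =>
    obtain ⟨a, x⟩ := p
    by_cases hx : x = Mon.end_
    · subst hx
      calc _ ≋ actSum l := by simpa using ih
        _ ≋ Mon.plus Mon.end_ (actSum l) := (end_plus _).symm
        _ ≋ Mon.plus (Mon.act a Mon.end_) (actSum l) :=
          Deriv.plus (Deriv.ax (Ea a)).symm (Deriv.refl _)
        _ ≋ actSum ((a, Mon.end_) :: l) := (sumList_cons _ _).symm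
    · rw [List.filter_cons_of_pos (by simpa using hx)]
      simp only [actSum, List.map_cons] at ih ⊢
      exact (sumList_cons _ _).trans ((Deriv.plus (Deriv.refl _) ih).trans (sumList_cons _ _).symm)

theorem exists_nf_of_actResidual {l : List (Act × Mon Act)} {d : ℕ}
    (h : ∀ a ∈ l.map Prod.fst, ∃ y, NF y ∧ actResidual l a ≋ y ∧ depth y < d)
    (hy hn : Bool) :
    ∃ m', NF m' ∧ buildNF l hy hn ≋ m' ∧ depth m' ≤ d := by
  have h' : ∀ a, ∃ y,
      a ∈ (l.map Prod.fst).dedup → NF y ∧ actResidual l a ≋ y ∧ depth y < d := by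
    intro a
    by_cases ha : a ∈ (l.map Prod.fst).dedup
    · obtain ⟨y, hy⟩ := h a (List.mem_dedup.mp ha)
      exact ⟨y, fun _ => hy⟩
    · exact ⟨Mon.end_, fun h => absurd h ha⟩
  choose f hf using h'
  set L := ((l.map Prod.fst).dedup.map fun a => (a, f a)).filter fun p => p.2 ≠ Mon.end_
  have hL : ∀ p ∈ L, p.2 ≠ Mon.end_ ∧ NF p.2 ∧ depth p.2 < d := by
    intro p hp
    simp only [L, List.mem_filter, List.mem_map] at hp
    obtain ⟨⟨a, ha, rfl⟩, hne⟩ := hp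
    exact ⟨of_decide_eq_true hne, (hf a ha).1, (hf a ha).2.2⟩
  refine ⟨buildNF L hy hn, NF.mk L hy hn ?_ (fun p hp => (hL p hp).1) (fun p hp => (hL p hp).2.1),
    buildNF_congr ?_ hy hn, depth_buildNF_le (fun p hp => (hL p hp).2.2) hy hn⟩
  · have hsub := (List.filter_sublist (p := fun p : Act × Mon Act => decide (p.2 ≠ Mon.end_))
      (l := (l.map Prod.fst).dedup.map fun a => (a, f a))).map Prod.fst
    rw [List.map_map, Function.comp_def, List.map_id'] at hsub
    exact hsub.nodup (List.nodup_dedup _)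
  · calc actSum l ≋ sumList ((l.map Prod.fst).dedup.map fun a => Mon.act a (actResidual l a)) :=
          (sum_act_actResidual l).symm
      _ ≋ sumList ((l.map Prod.fst).dedup.map fun a => Mon.act a (f a)) :=
          sumList_map_congr fun a ha => Deriv.act a (hf a ha).2.1
      _ ≋ actSum L := by
          simpa only [actSum, List.map_map, Function.comp_def] using
            (actSum_filter_ne_end ((l.map Prod.fst).dedup.map fun a => (a, f a))).symm

theorem closed_actResidual {l : List (Act × Mon Act)} (h : ∀ p ∈ l, Closed p.2) (a : Act) :
    Closed (actResidual l a) :=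
  closed_sumList fun x hx => by
    obtain ⟨p, hp, rfl⟩ := List.mem_map.mp hx
    exact h p (List.mem_of_mem_filter hp)

theorem depth_actResidual_lt {l : List (Act × Mon Act)} {d : ℕ} (h : ∀ p ∈ l, depth p.2 < d)
    {a : Act} (ha : a ∈ l.map Prod.fst) : depth (actResidual l a) < d := by
  obtain ⟨p, hp, -⟩ := List.mem_map.mp ha
  have := depth_sumList_le (l := (l.filter fun p => p.1 = a).map Prod.snd) (k := d - 1)
    fun x hx => by
      obtain ⟨q, hq, rfl⟩ := List.mem_map.mp hx
      have := h q (List.mem_of_mem_filter hq)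
      omega
  have := h p hp
  simp only [actResidual]
  omega

end

/-- normalization — every closed monitor is provably equal (in `E_v`)
to a normal form of no greater depth. -/
theorem stmt11 (m : Mon Act) (hm : Closed m) :
    ∃ m' : Mon Act, NF m' ∧ Deriv EvAx m m' ∧ depth m' ≤ depth m := by
  induction hd : depth m using Nat.strong_induction_on generalizing m with
  | _ d ih =>
  subst hd
  obtain ⟨l, hy, hn, hflat, hl⟩ := exists_buildNF m hm
  have hres : ∀ a ∈ l.map Prod.fst,
      ∃ y, NF y ∧ actResidual l a ≋ y ∧ depth y < depth m := by
    intro a ha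
    have hlt := depth_actResidual_lt (fun p hp => (hl p hp).2) ha
    obtain ⟨y, hy_nf, hy_der, hy_depth⟩ :=
      ih _ hlt _ (closed_actResidual (fun p hp => (hl p hp).1) a) rfl
    exact ⟨y, hy_nf, hy_der, hy_depth.trans_lt hlt⟩
  obtain ⟨m', hnf, hder, hdepth⟩ := exists_nf_of_actResidual hres hy hn
  exact ⟨m', hnf, hflat.trans hder, hdepth⟩
end

section
/- For every action a and every closed monitor m that contains no occurrence of the verdict no, the equation yes + a.m = yes is derivable from the axiom system E_v (axioms A1–A4, E_a, Y_a, N_a, D_a). -/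
variable {Act : Type}

/-!
Induction on `m`. `yes` absorbs `end` (A4), itself (A3) and sums (A2); it absorbs a prefix
`b.m` because `Y_b` and `D_b` give `yes + b.m = yes + b.(yes + m)`, which the induction
hypothesis turns into `yes + b.yes = yes`.
-/

local infix:50 " ≈ᵥ " => Deriv EvAx

lemma deriv_plus_assoc (m n p : Mon Act) :
    Mon.plus m (Mon.plus n p) ≈ᵥ Mon.plus (Mon.plus m n) p := by
  simpa [msubst, vx, vy, vz] using
    Deriv.subst (fun i => if i = 0 then m else if i = 1 then n else p) (Deriv.ax EvAx.A2)

lemma deriv_plus_self (m : Mon Act) : Mon.plus m m ≈ᵥ m := by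
  simpa [msubst, vx] using Deriv.subst (fun _ => m) (Deriv.ax EvAx.A3)

lemma deriv_plus_end (m : Mon Act) : Mon.plus m Mon.end_ ≈ᵥ m := by
  simpa [msubst, vx] using Deriv.subst (fun _ => m) (Deriv.ax EvAx.A4)

lemma deriv_act_plus (a : Act) (m n : Mon Act) :
    Mon.act a (Mon.plus m n) ≈ᵥ Mon.plus (Mon.act a m) (Mon.act a n) := by
  simpa [msubst, vx, vy] using
    Deriv.subst (fun i => if i = 0 then m else n) (Deriv.ax (EvAx.Da a))

lemma deriv_yes_plus_of_closed_of_not_hasNo {m : Mon Act} (hm : Closed m) (hno : ¬ HasNo m) :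
    Mon.plus Mon.yes m ≈ᵥ Mon.yes := by
  induction m with
  | end_ => exact deriv_plus_end _
  | yes => exact deriv_plus_self _
  | no => exact absurd trivial hno
  | var _ => exact hm.elim
  | act b m ih =>
    calc Mon.plus Mon.yes (Mon.act b m)
        ≈ᵥ Mon.plus (Mon.plus Mon.yes (Mon.act b Mon.yes)) (Mon.act b m) :=
          .plus (.ax (EvAx.Ya b)) (.refl _)
      _ ≈ᵥ Mon.plus Mon.yes (Mon.plus (Mon.act b Mon.yes) (Mon.act b m)) :=
          (deriv_plus_assoc _ _ _).symm
      _ ≈ᵥ Mon.plus Mon.yes (Mon.act b (Mon.plus Mon.yes m)) :=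
          .plus (.refl _) (deriv_act_plus b _ _).symm
      _ ≈ᵥ Mon.plus Mon.yes (Mon.act b Mon.yes) := .plus (.refl _) (.act b (ih hm hno))
      _ ≈ᵥ Mon.yes := (Deriv.ax (EvAx.Ya b)).symm
  | plus m n ihm ihn =>
    calc Mon.plus Mon.yes (Mon.plus m n) ≈ᵥ Mon.plus (Mon.plus Mon.yes m) n :=
          deriv_plus_assoc _ _ _
      _ ≈ᵥ Mon.plus Mon.yes n := .plus (ihm hm.1 fun h => hno (.inl h)) (.refl _)
      _ ≈ᵥ Mon.yes := ihn hm.2 fun h => hno (.inr h)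

/-- for `no`-free closed `m`, `E_v ⊢ yes + a.m = yes`. -/
theorem stmt12 (a : Act) (m : Mon Act) (hm : Closed m) (hnf : ¬ HasNo m) :
    Deriv EvAx (Mon.plus Mon.yes (Mon.act a m)) (Mon.yes : Mon Act) :=
  deriv_yes_plus_of_closed_of_not_hasNo (m := Mon.act a m) hm hnf
end

section
/- The axiom system E_v is sound for verdict equivalence: for all (open) monitors m, n, if E_v ⊢ m = n then σ(m) ≃ σ(n) for every closed substitution σ. -/
variable {Act : Type}

/-!
A derivation step replaces a subterm by an equal one, so it suffices that the set of traces
leading to a fixed final verdict `v ∈ {yes, no}` is a compositional invariant: it sends `+` to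
union and `a.m` to the image under `a :: ·`, and it is `∅` on `end`. Under this reading the
axioms become set identities: commutativity, associativity and idempotence of `∪`, the unit `∅`,
and distributivity of the image over `∪` for `Da`. Axioms `Ya` and `Na` hold because a verdict
only reaches itself, along every trace, so its language is `∅` or everything and is closed under
prefixing an action. Substitution instances are handled by proving the invariant for all
substitutions at once and composing them.
-/

namespace IsVerdict

variable {v : Mon Act}

lemma ne_plus (hv : IsVerdict v) (m n : Mon Act) : v ≠ Mon.plus m n := by
  cases hv <;> simp

lemma ne_act (hv : IsVerdict v) (a : Act) (m : Mon Act) : v ≠ Mon.act a m := by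
  cases hv <;> simp

lemma step_eq (hv : IsVerdict v) {α : Option Act} {q : Mon Act} (h : Step v α q) : q = v := by
  cases h with
  | verdict => rfl
  | act => cases hv
  | plusL => cases hv
  | plusR => cases hv

lemma tauStar_eq (hv : IsVerdict v) {q : Mon Act} (h : TauStar v q) : q = v := by
  induction h with
  | refl => rfl
  | tail _ hs ih => subst ih; exact hv.step_eq hs

lemma wtrace_eq (hv : IsVerdict v) {s : List Act} {q : Mon Act} (h : WTrace v s q) : q = v := by
  suffices ∀ {m s}, WTrace m s q → m = v → q = v from this h rfl
  clear h
  intro m s h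
  induction h with
  | nil ht => rintro rfl; exact hv.tauStar_eq ht
  | cons ht hs _ ih =>
    rintro rfl
    obtain rfl := hv.tauStar_eq ht
    exact ih (hv.step_eq hs)

lemma wtrace_self (hv : IsVerdict v) (s : List Act) : WTrace v s v := by
  induction s with
  | nil => exact WTrace.nil .refl
  | cons a s ih => exact WTrace.cons .refl (Step.verdict hv) ih

end IsVerdict

lemma step_plus_iff {m n q : Mon Act} {α : Option Act} :
    Step (Mon.plus m n) α q ↔ Step m α q ∨ Step n α q := by
  constructor
  · rintro (_ | h | h | hv)
    · exact Or.inl h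
    · exact Or.inr h
    · cases hv
  · rintro (h | h)
    · exact Step.plusL h
    · exact Step.plusR h

lemma step_act_iff {a : Act} {m q : Mon Act} {α : Option Act} :
    Step (Mon.act a m) α q ↔ α = some a ∧ q = m := by
  constructor
  · rintro (_ | _ | _ | hv)
    · exact ⟨rfl, rfl⟩
    · cases hv
  · rintro ⟨rfl, rfl⟩
    exact Step.act _ _

lemma tauStar_act_eq {a : Act} {m q : Mon Act} (h : TauStar (Mon.act a m) q) :
    q = Mon.act a m := by
  rcases h.cases_head with rfl | ⟨r, hs, _⟩
  · rfl
  · cases (step_act_iff.1 hs).1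

/-- A verdict target makes even the empty weak trace start with a step (the verdict's self-loop). -/
lemma WTrace.of_step_imp_s13 {m m' p : Mon Act} {s : List Act} (hp : IsVerdict p)
    (hstep : ∀ α q, Step m α q → Step m' α q) (h : WTrace m s p) : WTrace m' s p := by
  cases h with
  | nil h =>
    rcases h.cases_head with rfl | ⟨q, hs, ht⟩
    · exact WTrace.nil (.single (hstep _ _ (Step.verdict hp)))
    · exact WTrace.nil (.head (hstep _ _ hs) ht)
  | cons ht hs hw =>
    rcases ht.cases_head with rfl | ⟨q, h1, h2⟩
    · exact WTrace.cons .refl (hstep _ _ hs) hw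
    · exact WTrace.cons (.head (hstep _ _ h1) h2) hs hw

lemma wtrace_plus_iff {m n p : Mon Act} {s : List Act} (hp : IsVerdict p) :
    WTrace (Mon.plus m n) s p ↔ WTrace m s p ∨ WTrace n s p := by
  constructor
  · rintro (h | ⟨ht, hs, hw⟩)
    · rcases h.cases_head with h' | ⟨q, hs, ht⟩
      · exact absurd h'.symm (hp.ne_plus m n)
      · exact (step_plus_iff.1 hs).imp (fun h => .nil (.head h ht)) (fun h => .nil (.head h ht))
    · rcases ht.cases_head with rfl | ⟨q, h1, h2⟩
      · exact (step_plus_iff.1 hs).imp (fun h => .cons .refl h hw) (fun h => .cons .refl h hw)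
      · exact (step_plus_iff.1 h1).imp (fun h => .cons (.head h h2) hs hw)
          (fun h => .cons (.head h h2) hs hw)
  · rintro (h | h)
    · exact h.of_step_imp_s13 hp fun _ _ => Step.plusL
    · exact h.of_step_imp_s13 hp fun _ _ => Step.plusR

lemma wtrace_act_iff {a : Act} {m p : Mon Act} {s : List Act} (hp : IsVerdict p) :
    WTrace (Mon.act a m) s p ↔ ∃ s', s = a :: s' ∧ WTrace m s' p := by
  constructor
  · rintro (h | ⟨ht, hs, hw⟩)
    · exact absurd (tauStar_act_eq h) (hp.ne_act a m)
    · obtain rfl := tauStar_act_eq ht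
      obtain ⟨ha, rfl⟩ := step_act_iff.1 hs
      cases ha
      exact ⟨_, rfl, hw⟩
  · rintro ⟨s', rfl, h⟩
    exact WTrace.cons .refl (Step.act a m) h

lemma msubst_msubst (σ τ : ℕ → Mon Act) (m : Mon Act) :
    msubst σ (msubst τ m) = msubst (fun x => msubst σ (τ x)) m := by
  induction m with
  | act a m ih => simp only [msubst, ih]
  | plus m n ihm ihn => simp only [msubst, ihm, ihn]
  | _ => rfl

/-- `verdictLang Mon.yes = La` and `verdictLang Mon.no = Lr`. -/
def verdictLang (v m : Mon Act) : Set (List Act) := {s | WTrace m s v}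

section verdictLang

variable {p : Mon Act}

lemma verdictLang_plus (hp : IsVerdict p) (m n : Mon Act) :
    verdictLang p (Mon.plus m n) = verdictLang p m ∪ verdictLang p n :=
  Set.ext fun _ => wtrace_plus_iff hp

lemma verdictLang_act (hp : IsVerdict p) (a : Act) (m : Mon Act) :
    verdictLang p (Mon.act a m) = (a :: ·) '' verdictLang p m := by
  ext s
  simp only [verdictLang, Set.mem_ofPred_eq, Set.mem_image, wtrace_act_iff hp]
  exact exists_congr fun s' => by rw [and_comm, eq_comm]

lemma verdictLang_eq_empty_of_ne {v : Mon Act} (hv : IsVerdict v) (hne : p ≠ v) :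
    verdictLang p v = ∅ :=
  Set.eq_empty_of_forall_notMem fun _ h => hne (hv.wtrace_eq h)

lemma image_cons_verdictLang_subset {v : Mon Act} (hv : IsVerdict v) (a : Act) :
    (a :: ·) '' verdictLang p v ⊆ verdictLang p v := by
  rintro _ ⟨s, hs, rfl⟩
  obtain rfl := hv.wtrace_eq hs
  exact hv.wtrace_self _

lemma verdictLang_msubst_eq_of_evAx (hp : IsVerdict p) (hpe : p ≠ Mon.end_) {m n : Mon Act}
    (h : EvAx m n) (σ : ℕ → Mon Act) :
    verdictLang p (msubst σ m) = verdictLang p (msubst σ n) := by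
  have hend := verdictLang_eq_empty_of_ne IsVerdict.end_ hpe
  cases h with
  | A1 => simp only [msubst, vx, vy, verdictLang_plus hp, Set.union_comm]
  | A2 => simp only [msubst, vx, vy, vz, verdictLang_plus hp, Set.union_assoc]
  | A3 => simp only [msubst, vx, verdictLang_plus hp, Set.union_self]
  | A4 => simp only [msubst, vx, verdictLang_plus hp, hend, Set.union_empty]
  | Ea a => simp only [msubst, verdictLang_act hp, hend, Set.image_empty]
  | Ya a =>
    simp only [msubst, verdictLang_plus hp, verdictLang_act hp]
    exact (Set.union_eq_left.2 (image_cons_verdictLang_subset IsVerdict.yes a)).symm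
  | Na a =>
    simp only [msubst, verdictLang_plus hp, verdictLang_act hp]
    exact (Set.union_eq_left.2 (image_cons_verdictLang_subset IsVerdict.no a)).symm
  | Da a => simp only [msubst, vx, vy, verdictLang_plus hp, verdictLang_act hp, Set.image_union]

lemma verdictLang_msubst_eq_of_deriv (hp : IsVerdict p) (hpe : p ≠ Mon.end_) {m n : Mon Act}
    (h : Deriv EvAx m n) (σ : ℕ → Mon Act) :
    verdictLang p (msubst σ m) = verdictLang p (msubst σ n) := by
  induction h generalizing σ with
  | ax h => exact verdictLang_msubst_eq_of_evAx hp hpe h σ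
  | refl => rfl
  | symm _ ih => exact (ih σ).symm
  | trans _ _ ih₁ ih₂ => exact (ih₁ σ).trans (ih₂ σ)
  | act a _ ih => simp only [msubst, verdictLang_act hp, ih σ]
  | plus _ _ ih₁ ih₂ => simp only [msubst, verdictLang_plus hp, ih₁ σ, ih₂ σ]
  | subst τ _ ih => simp only [msubst_msubst, ih]

end verdictLang

theorem stmt13_general (m n : Mon Act) (h : Deriv EvAx m n)
    (σ : ℕ → Mon Act) :
    VerdEq (msubst σ m) (msubst σ n) :=
  ⟨verdictLang_msubst_eq_of_deriv IsVerdict.yes nofun h σ,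
    verdictLang_msubst_eq_of_deriv IsVerdict.no nofun h σ⟩

/-- soundness of `E_v` with respect to verdict equivalence. -/
theorem stmt13 (m n : Mon Act) (h : Deriv EvAx m n)
    (σ : ℕ → Mon Act) (hσ : ∀ v, Closed (σ v)) :
    VerdEq (msubst σ m) (msubst σ n) :=
  stmt13_general m n h σ
end
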